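/- arXiv:2605.13474 — 2 statements merged into one kernel-verified Lean document; each statement's English description precedes it below -/
import Mathlib

section
/- In the directed hitting-set gadget graph G(H) (with k ≥ 2, ρ = k + d where d is the uniform hyperedge size), a vertex fails to have a (k,ρ)-ball if and only if it is of the form s_e for some hyperedge e; each s_e reaches exactly ρ − 1 vertices within k hops and can reach T_2 only in k+1 hops. -/
open scoped ENNReal Classical

/-- A walk from `u` is recorded as the list `p` of vertices visited after `u`;
it ends at `v` if the last vertex of `u :: p` is `v`. -/
def WalkEnds {V : Type*} (u : V) (p : List V) (v : V) : Prop := p.getLastD u = v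

/-- A weighted (di)graph on vertex set `V`: weight `⊤` means "no edge". -/
structure WGraph (V : Type*) where
  w : V → V → ℝ≥0∞

namespace WGraph

variable {V : Type*} (G : WGraph V)

/-- Total weight of the walk `u :: p`. -/
noncomputable def walkWeight : V → List V → ℝ≥0∞
  | _, [] => 0
  | u, v :: p => G.w u v + walkWeight v p

/-- Weight distance. -/
noncomputable def dist (u v : V) : ℝ≥0∞ :=
  sInf {c | ∃ p : List V, WalkEnds u p v ∧ G.walkWeight u p = c}

/-- Hop distance: the minimum number of edges among minimum-weight walks;
`⊤` if `v` is unreachable from `u`. -/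
noncomputable def hopdist (u v : V) : ℕ∞ :=
  if G.dist u v = ⊤ then ⊤
  else sInf {n : ℕ∞ | ∃ p : List V, WalkEnds u p v ∧
    G.walkWeight u p = G.dist u v ∧ (p.length : ℕ∞) = n}

/-- The set of vertices reachable from `u`, other than `u` itself. -/
def Reach (u : V) : Set V := {v | v ≠ u ∧ G.dist u v ≠ ⊤}

/-- `S` is a `ρ`-closest neighbor set of `u`. -/
def IsClosest (ρ : ℕ) (u : V) (S : Set V) : Prop :=
  S ⊆ G.Reach u ∧ S.ncard = min (G.Reach u).ncard ρ ∧
    ∀ v ∈ S, ∀ x ∈ G.Reach u \ S, G.dist u v ≤ G.dist u x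

/-- `u` has a `(k,ρ)`-ball: some `ρ`-closest neighbor set lies within hop distance `k`. -/
def HasBall (k ρ : ℕ) (u : V) : Prop :=
  ∃ S : Set V, G.IsClosest ρ u S ∧ ∀ v ∈ S, G.hopdist u v ≤ (k : ℕ∞)

/-- `G` is a `(k,ρ)`-graph. -/
def IsKRhoGraph (k ρ : ℕ) : Prop := ∀ u, G.HasBall k ρ u

/-- `G` is undirected (symmetric weights). -/
def Symm : Prop := ∀ u v, G.w u v = G.w v u

/-- All edge weights are strictly positive (trivial for non-edges of weight `⊤`). -/
def Positive : Prop := ∀ u v, 0 < G.w u v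

/-- `(u,v)` is a (potential) shortcut: `v` is reachable from `u` and the hop distance
exceeds `1`. -/
def IsShortcut (u v : V) : Prop := G.dist u v ≠ ⊤ ∧ 1 < G.hopdist u v

/-- Add each pair in `S` as a directed edge of weight `G.dist`. -/
noncomputable def addD (S : Set (V × V)) : WGraph V :=
  ⟨fun a b => G.w a b ⊓ sInf {c | (a, b) ∈ S ∧ c = G.dist a b}⟩

/-- Add each pair in `S` as an undirected edge of weight `G.dist`. -/
noncomputable def addU (S : Set (V × V)) : WGraph V :=
  ⟨fun a b => G.w a b ⊓ sInf {c | ((a, b) ∈ S ∨ (b, a) ∈ S) ∧ c = G.dist a b}⟩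

/-- `S` is a (directed) `(k,ρ)`-shortcut set for `G`. -/
def IsShortcutSetD (k ρ : ℕ) (S : Set (V × V)) : Prop :=
  (∀ p ∈ S, G.IsShortcut p.1 p.2) ∧ (G.addD S).IsKRhoGraph k ρ ∧
    ∀ x y, (G.addD S).dist x y = G.dist x y

/-- `S` is an (undirected) `(k,ρ)`-shortcut set for `G`. -/
def IsShortcutSetU (k ρ : ℕ) (S : Set (V × V)) : Prop :=
  (∀ p ∈ S, G.IsShortcut p.1 p.2) ∧ (G.addU S).IsKRhoGraph k ρ ∧
    ∀ x y, (G.addU S).dist x y = G.dist x y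

end WGraph

/-- Vertices of the hitting-set gadget graph: for each hyperedge `e` the path vertices
`pv e 0, …, pv e (k-2)` (so `s_e = pv e 0` and `t_e = pv e (k-2)`), a vertex `hv v`
for each hypergraph vertex `v`, and the two terminals `T1`, `T2`. -/
inductive GV (α ε : Type*) where
  | pv : ε → ℕ → GV α ε
  | hv : α → GV α ε
  | T1 : GV α ε
  | T2 : GV α ε

/-- Edge weights of the directed hitting-set gadget graph. -/
noncomputable def gadgetW {α ε : Type*} [DecidableEq α] [DecidableEq ε]
    (k : ℕ) (E : ε → Finset α) : GV α ε → GV α ε → ℝ≥0∞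
  | .pv e i, .pv e' j => if e = e' ∧ j = i + 1 ∧ j ≤ k - 2 then 1 else ⊤
  | .pv e i, .hv v => if i = k - 2 ∧ v ∈ E e then 3 else ⊤
  | .hv _, .T1 => 1
  | .T1, .T2 => 1
  | _, _ => ⊤

/-- The directed hitting-set gadget graph `G(H)`. -/
noncomputable def gadget {α ε : Type*} [DecidableEq α] [DecidableEq ε]
    (k : ℕ) (E : ε → Finset α) : WGraph (GV α ε) :=
  ⟨gadgetW k E⟩

/-- The undirected hitting-set gadget graph: every directed edge replaced by an
undirected edge of the same weight. -/
noncomputable def ugadget {α ε : Type*} [DecidableEq α] [DecidableEq ε]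
    (k : ℕ) (E : ε → Finset α) : WGraph (GV α ε) :=
  ⟨fun a b => gadgetW k E a b ⊓ gadgetW k E b a⟩

/-- `U` is a hitting set of the hypergraph with hyperedges `E`. -/
def IsHittingSet {α ε : Type*} (E : ε → Finset α) (U : Finset α) : Prop :=
  ∀ e, ∃ v ∈ U, v ∈ E e

/-!
Every edge of the directed gadget goes up exactly one level, where `pv e i` has level `i`,
the hypergraph vertices level `k - 1`, `T1` level `k` and `T2` level `k + 1`. Hence all walks
between two vertices have the same length, and since the weights are integers a minimum-weight
walk exists: the hop distance is just the difference of levels. Every vertex other than some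
`s_e` has level at least `1` and reaches at most `k + d` vertices, all of level at most `k + 1`,
so its whole reachable set is a ball. The vertex `s_e` reaches exactly `k + d = ρ` vertices,
so its only `ρ`-closest set is everything it reaches, including `T2` at `k + 1` hops.
-/

namespace WGraph

variable {V : Type*} (G : WGraph V)

def Adj (a b : V) : Prop := G.w a b ≠ ⊤

lemma walkWeight_cons (u v : V) (p : List V) :
    G.walkWeight u (v :: p) = G.w u v + G.walkWeight v p := rfl

lemma dist_le_walkWeight {u v : V} {p : List V} (h : WalkEnds u p v) :
    G.dist u v ≤ G.walkWeight u p :=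
  sInf_le ⟨p, h, rfl⟩

lemma dist_ne_top_iff_exists_walk {u v : V} :
    G.dist u v ≠ ⊤ ↔ ∃ p, WalkEnds u p v ∧ G.walkWeight u p ≠ ⊤ := by
  refine ⟨fun h => ?_, fun ⟨p, hp, hw⟩ => ne_top_of_le_ne_top hw (G.dist_le_walkWeight hp)⟩
  obtain ⟨_, ⟨p, hp, rfl⟩, hlt⟩ := sInf_lt_iff.mp (lt_top_iff_ne_top.mpr h)
  exact ⟨p, hp, hlt.ne⟩

lemma reflTransGen_adj_getLastD :
    ∀ (u : V) (p : List V), G.walkWeight u p ≠ ⊤ →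
      Relation.ReflTransGen G.Adj u (p.getLastD u)
  | _, [], _ => .refl
  | u, v :: p, h => by
    rw [walkWeight_cons, ne_eq, ENNReal.add_eq_top, not_or] at h
    rw [List.getLastD_cons]
    exact .head h.1 (reflTransGen_adj_getLastD v p h.2)

lemma dist_ne_top_iff_reflTransGen {u v : V} :
    G.dist u v ≠ ⊤ ↔ Relation.ReflTransGen G.Adj u v := by
  rw [dist_ne_top_iff_exists_walk]
  constructor
  · rintro ⟨p, rfl, hp⟩
    exact G.reflTransGen_adj_getLastD u p hp
  · intro h
    induction h using Relation.ReflTransGen.head_induction_on with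
    | refl => exact ⟨[], rfl, ENNReal.zero_ne_top⟩
    | @head a b hab _ ih =>
      obtain ⟨p, hp, hw⟩ := ih
      exact ⟨b :: p, by rwa [WalkEnds, List.getLastD_cons],
        by rw [walkWeight_cons]; exact ENNReal.add_ne_top.mpr ⟨hab, hw⟩⟩

lemma reach_subset_of_forall_adj {S : Set V} {u : V} (hu : u ∈ S)
    (hS : ∀ a ∈ S, ∀ b, G.Adj a b → b ∈ S) : G.Reach u ⊆ S := by
  rintro v ⟨-, hv⟩
  rw [dist_ne_top_iff_reflTransGen] at hv
  induction hv with
  | refl => exact hu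
  | tail _ hbc ih => exact hS _ ih _ hbc

lemma dist_ne_top_of_hopdist_le {u v : V} {n : ℕ} (h : G.hopdist u v ≤ n) :
    G.dist u v ≠ ⊤ := fun hd => by
  rw [hopdist, if_pos hd, top_le_iff] at h
  exact ENat.natCast_ne_top n h

lemma hasBall_of_ncard_reach_le {k ρ : ℕ} {u : V} (hcard : (G.Reach u).ncard ≤ ρ)
    (hhop : ∀ v ∈ G.Reach u, G.hopdist u v ≤ k) : G.HasBall k ρ u :=
  ⟨G.Reach u, ⟨subset_rfl, by rw [min_eq_left hcard], by simp⟩, hhop⟩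

lemma not_hasBall_of_ncard_reach_eq {k ρ : ℕ} {u v : V} (hfin : (G.Reach u).Finite)
    (hcard : (G.Reach u).ncard = ρ) (hv : v ∈ G.Reach u) (hhop : (k : ℕ∞) < G.hopdist u v) :
    ¬ G.HasBall k ρ u := by
  rintro ⟨S, ⟨hSu, hS, -⟩, hSk⟩
  have : S = G.Reach u := Set.eq_of_subset_of_ncard_le hSu (by rw [hS, hcard, min_self]) hfin
  exact (hSk v (this ▸ hv)).not_gt hhop

section Layered

variable {G} {L : V → ℕ}

lemma level_getLastD (hL : ∀ a b, G.Adj a b → L b = L a + 1) :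
    ∀ (u : V) (p : List V), G.walkWeight u p ≠ ⊤ → L (p.getLastD u) = L u + p.length
  | _, [], _ => rfl
  | u, v :: p, h => by
    rw [walkWeight_cons, ne_eq, ENNReal.add_eq_top, not_or] at h
    rw [List.getLastD_cons, level_getLastD hL v p h.2, hL u v h.1, List.length_cons]
    ring

lemma exists_walkWeight_eq_natCast (hw : ∀ a b, G.Adj a b → ∃ n : ℕ, G.w a b = n) :
    ∀ (u : V) (p : List V), G.walkWeight u p ≠ ⊤ → ∃ n : ℕ, G.walkWeight u p = n
  | _, [], _ => ⟨0, Nat.cast_zero.symm⟩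
  | u, v :: p, h => by
    rw [walkWeight_cons, ne_eq, ENNReal.add_eq_top, not_or] at h
    obtain ⟨m, hm⟩ := hw u v h.1
    obtain ⟨n, hn⟩ := exists_walkWeight_eq_natCast hw v p h.2
    exact ⟨m + n, by rw [walkWeight_cons, hm, hn, Nat.cast_add]⟩

lemma exists_walkWeight_eq_dist (hw : ∀ a b, G.Adj a b → ∃ n : ℕ, G.w a b = n) {u v : V}
    (h : G.dist u v ≠ ⊤) : ∃ p, WalkEnds u p v ∧ G.walkWeight u p = G.dist u v := by
  have hex : ∃ n : ℕ, ∃ p, WalkEnds u p v ∧ G.walkWeight u p = n := by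
    obtain ⟨p, hp, hne⟩ := G.dist_ne_top_iff_exists_walk.mp h
    obtain ⟨n, hn⟩ := exists_walkWeight_eq_natCast hw u p hne
    exact ⟨n, p, hp, hn⟩
  obtain ⟨p, hp, hpw⟩ := Nat.find_spec hex
  refine ⟨p, hp, le_antisymm ?_ (G.dist_le_walkWeight hp)⟩
  refine le_sInf ?_
  rintro _ ⟨q, hq, rfl⟩
  by_cases hqt : G.walkWeight u q = ⊤
  · exact hqt ▸ le_top
  obtain ⟨n, hn⟩ := exists_walkWeight_eq_natCast hw u q hqt
  rw [hpw, hn]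
  exact_mod_cast Nat.find_min' hex ⟨q, hq, hn⟩

lemma hopdist_eq_sub (hL : ∀ a b, G.Adj a b → L b = L a + 1)
    (hw : ∀ a b, G.Adj a b → ∃ n : ℕ, G.w a b = n) {u v : V} (h : G.dist u v ≠ ⊤) :
    G.hopdist u v = (L v - L u : ℕ) := by
  have hlen : ∀ p, WalkEnds u p v → G.walkWeight u p = G.dist u v →
      (p.length : ℕ∞) = (L v - L u : ℕ) := fun p hp hpw => by
    have := level_getLastD hL u p (hpw ▸ h)
    rw [hp] at this
    rw [show p.length = L v - L u by omega]
  rw [hopdist, if_neg h]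
  obtain ⟨p, hp, hpw⟩ := exists_walkWeight_eq_dist hw h
  refine le_antisymm (sInf_le ⟨p, hp, hpw, hlen p hp hpw⟩) (le_sInf ?_)
  rintro _ ⟨q, hq, hqw, rfl⟩
  exact (hlen q hq hqw).ge

end Layered

end WGraph

namespace GV

variable {α ε : Type*}

def level (k : ℕ) : GV α ε → ℕ
  | pv _ i => i
  | hv _ => k - 1
  | T1 => k
  | T2 => k + 1

noncomputable def descendants (k : ℕ) (E : ε → Finset α) (e : ε) (i : ℕ) :
    Finset (GV α ε) :=
  (Finset.Ioc i (k - 2)).image (pv e) ∪ (E e).image hv ∪ {T1, T2}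

lemma card_descendants (k : ℕ) (E : ε → Finset α) (e : ε) (i : ℕ) :
    (descendants k E e i).card = (k - 2 - i) + (E e).card + 2 := by
  have hdisj₁ : Disjoint ((Finset.Ioc i (k - 2)).image (pv e)) ((E e).image (hv (ε := ε))) := by
    simp only [Finset.disjoint_left, Finset.mem_image]
    rintro _ ⟨_, _, rfl⟩ ⟨_, _, ⟨⟩⟩
  have hdisj₂ : Disjoint ((Finset.Ioc i (k - 2)).image (pv e) ∪ (E e).image hv)
      ({T1, T2} : Finset (GV α ε)) := by
    simp only [Finset.disjoint_left, Finset.mem_union, Finset.mem_image]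
    rintro _ (⟨_, _, rfl⟩ | ⟨_, _, rfl⟩) <;> simp
  rw [descendants, Finset.card_union_of_disjoint hdisj₂, Finset.card_union_of_disjoint hdisj₁,
    Finset.card_image_of_injective _ (fun _ _ h => (pv.inj h).2),
    Finset.card_image_of_injective _ (fun _ _ h => hv.inj h), Nat.card_Ioc,
    Finset.card_pair (by simp)]

lemma mem_descendants {k : ℕ} {E : ε → Finset α} {e : ε} {i : ℕ} {v : GV α ε} :
    v ∈ descendants k E e i ↔
      (∃ j, i < j ∧ j ≤ k - 2 ∧ v = pv e j) ∨ (∃ w ∈ E e, v = hv w) ∨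
        v = T1 ∨ v = T2 := by
  simp only [descendants, Finset.mem_union, Finset.mem_image, Finset.mem_Ioc,
    Finset.mem_insert, Finset.mem_singleton]
  aesop

end GV

open GV WGraph

section Gadget

variable {α ε : Type*} [DecidableEq α] [DecidableEq ε] {k : ℕ} {E : ε → Finset α}

lemma gadget_adj_iff {a b : GV α ε} : (gadget k E).Adj a b ↔
    (∃ e i, a = pv e i ∧ b = pv e (i + 1) ∧ i + 1 ≤ k - 2) ∨
    (∃ e w, a = pv e (k - 2) ∧ b = hv w ∧ w ∈ E e) ∨
    (∃ w, a = hv w ∧ b = T1) ∨ (a = T1 ∧ b = T2) := by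
  cases a <;> cases b <;> simp [WGraph.Adj, gadget, gadgetW, eq_comm, and_comm, and_left_comm]
  grind

lemma gadget_level_succ (hk : 2 ≤ k) {a b : GV α ε} (h : (gadget k E).Adj a b) :
    b.level k = a.level k + 1 := by
  rcases gadget_adj_iff.mp h with
    ⟨e, i, rfl, rfl, -⟩ | ⟨e, w, rfl, rfl, -⟩ | ⟨w, rfl, rfl⟩ | ⟨rfl, rfl⟩ <;>
  simp only [level] <;> omega

lemma gadget_level_le_of_adj {a b : GV α ε} (h : (gadget k E).Adj a b) : b.level k ≤ k + 1 := by
  rcases gadget_adj_iff.mp h with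
    ⟨e, i, rfl, rfl, _⟩ | ⟨e, w, rfl, rfl, -⟩ | ⟨w, rfl, rfl⟩ | ⟨rfl, rfl⟩ <;>
  simp only [level] <;> omega

lemma gadget_w_eq_natCast {a b : GV α ε} (h : (gadget k E).Adj a b) :
    ∃ n : ℕ, (gadget k E).w a b = n := by
  rcases gadget_adj_iff.mp h with
    ⟨e, i, rfl, rfl, hi⟩ | ⟨e, w, rfl, rfl, hw⟩ | ⟨w, rfl, rfl⟩ | ⟨rfl, rfl⟩
  · exact ⟨1, by simp [gadget, gadgetW, hi]⟩
  · exact ⟨3, by simp [gadget, gadgetW, hw]⟩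
  · exact ⟨1, by simp [gadget, gadgetW]⟩
  · exact ⟨1, by simp [gadget, gadgetW]⟩

lemma gadget_hopdist (hk : 2 ≤ k) {u v : GV α ε} (h : (gadget k E).dist u v ≠ ⊤) :
    (gadget k E).hopdist u v = (v.level k - u.level k : ℕ) :=
  hopdist_eq_sub (fun _ _ => gadget_level_succ hk) (fun _ _ => gadget_w_eq_natCast) h

lemma gadget_level_le_of_mem_reach {u v : GV α ε} (hv : v ∈ (gadget k E).Reach u) :
    v.level k ≤ k + 1 := by
  obtain ⟨hvu, hd⟩ := hv
  rcases ((gadget k E).dist_ne_top_iff_reflTransGen.mp hd).cases_tail with rfl | ⟨_, -, hbv⟩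
  · exact absurd rfl hvu
  · exact gadget_level_le_of_adj hbv

lemma gadget_reach_pv_subset (e : ε) (i : ℕ) :
    (gadget k E).Reach (pv e i) ⊆ descendants k E e i := by
  intro v hv
  refine (reach_subset_of_forall_adj _ (Set.mem_insert _ _) ?_ hv).resolve_left hv.1
  intro a ha b hab
  rw [Set.mem_insert_iff, Finset.mem_coe, mem_descendants] at ha ⊢
  rcases gadget_adj_iff.mp hab with
    ⟨f, j, rfl, rfl, hj⟩ | ⟨f, w, rfl, rfl, hw⟩ | ⟨w, rfl, rfl⟩ | ⟨rfl, rfl⟩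
  · grind
  · grind
  · simp
  · simp

lemma gadget_reach_subset_terminals {x : GV α ε} (hx : ∀ e i, x ≠ pv e i) :
    (gadget k E).Reach x ⊆ {T1, T2} := by
  intro v hv
  refine (reach_subset_of_forall_adj _ (Set.mem_insert _ _) ?_ hv).resolve_left hv.1
  intro a ha b hab
  rcases gadget_adj_iff.mp hab with
    ⟨f, j, rfl, -, -⟩ | ⟨f, w, rfl, -, -⟩ | ⟨w, rfl, rfl⟩ | ⟨rfl, rfl⟩
  · exact (hx f j (by simpa using ha : pv f j = x).symm).elim
  · exact (hx f _ (by simpa using ha : pv f (k - 2) = x).symm).elim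
  · simp
  · simp

end Gadget

section Source

variable {α ε : Type*} [DecidableEq α] [DecidableEq ε] {k : ℕ} {E : ε → Finset α} {e : ε}

lemma gadget_reach_source (hE : (E e).Nonempty) :
    (gadget k E).Reach (pv e 0) = descendants k E e 0 := by
  refine (gadget_reach_pv_subset e 0).antisymm ?_
  have hpath : ∀ j ≤ k - 2, Relation.ReflTransGen (gadget k E).Adj (pv e 0) (pv e j) := by
    intro j
    induction j with
    | zero => exact fun _ => .refl
    | succ j ih =>
      exact fun hj => (ih (by omega)).tail (gadget_adj_iff.mpr (.inl ⟨e, j, rfl, rfl, hj⟩))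
  have hhv : ∀ w ∈ E e, Relation.ReflTransGen (gadget k E).Adj (pv e 0) (hv w) := fun w hw =>
    (hpath _ le_rfl).tail (gadget_adj_iff.mpr (.inr (.inl ⟨e, w, rfl, rfl, hw⟩)))
  obtain ⟨w, hw⟩ := hE
  have hT1 := (hhv w hw).tail (gadget_adj_iff.mpr (.inr (.inr (.inl ⟨w, rfl, rfl⟩))))
  have hT2 := hT1.tail (gadget_adj_iff.mpr (.inr (.inr (.inr ⟨rfl, rfl⟩))))
  intro v hv
  rw [Finset.mem_coe, mem_descendants] at hv
  rcases hv with ⟨j, hj0, hj, rfl⟩ | ⟨w, hw, rfl⟩ | rfl | rfl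
  · refine ⟨by simp [hj0.ne'], (gadget k E).dist_ne_top_iff_reflTransGen.mpr (hpath j hj)⟩
  all_goals refine ⟨by simp, (gadget k E).dist_ne_top_iff_reflTransGen.mpr ?_⟩
  · exact hhv w hw
  · exact hT1
  · exact hT2

lemma T2_mem_gadget_reach_source (hE : (E e).Nonempty) : T2 ∈ (gadget k E).Reach (pv e 0) := by
  rw [gadget_reach_source hE, Finset.mem_coe, mem_descendants]
  simp

lemma gadget_hopdist_source_T2 (hk : 2 ≤ k) (hE : (E e).Nonempty) :
    (gadget k E).hopdist (pv e 0) T2 = (k + 1 : ℕ) := by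
  rw [gadget_hopdist hk (T2_mem_gadget_reach_source hE).2]
  rfl

lemma ncard_gadget_reach_source (hk : 2 ≤ k) (hE : (E e).Nonempty) :
    ((gadget k E).Reach (pv e 0)).ncard = k + (E e).card := by
  rw [gadget_reach_source hE, Set.ncard_coe_finset, card_descendants]
  omega

lemma not_hasBall_source (hk : 2 ≤ k) (hE : (E e).Nonempty) :
    ¬ (gadget k E).HasBall k (k + (E e).card) (pv e 0) := by
  refine not_hasBall_of_ncard_reach_eq _ ?_ (ncard_gadget_reach_source hk hE) (v := T2) ?_ ?_
  · rw [gadget_reach_source hE]; exact Finset.finite_toSet _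
  · exact T2_mem_gadget_reach_source hE
  · rw [gadget_hopdist_source_T2 hk hE]; exact_mod_cast k.lt_succ_self

lemma ncard_hopdist_le_source (hk : 2 ≤ k) (hE : (E e).Nonempty) :
    {y : GV α ε | y ≠ pv e 0 ∧ (gadget k E).hopdist (pv e 0) y ≤ k}.ncard =
      k + (E e).card - 1 := by
  have hset : {y : GV α ε | y ≠ pv e 0 ∧ (gadget k E).hopdist (pv e 0) y ≤ k} =
      (gadget k E).Reach (pv e 0) \ {T2} := by
    ext y
    constructor
    · rintro ⟨hne, hhop⟩
      refine ⟨⟨hne, (gadget k E).dist_ne_top_of_hopdist_le hhop⟩, ?_⟩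
      rintro rfl
      rw [gadget_hopdist_source_T2 hk hE, Nat.cast_le] at hhop
      omega
    · rintro ⟨hy, hyT2⟩
      refine ⟨hy.1, ?_⟩
      rw [gadget_hopdist hk hy.2, Nat.cast_le]
      rw [gadget_reach_source hE, Finset.mem_coe, mem_descendants] at hy
      rcases hy with ⟨j, -, hj, rfl⟩ | ⟨w, -, rfl⟩ | rfl | rfl
      · simp only [level]; omega
      · simp only [level]; omega
      · simp only [level]; omega
      · exact absurd rfl hyT2
  rw [hset, Set.ncard_sdiff_singleton_of_mem (T2_mem_gadget_reach_source hE),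
    ncard_gadget_reach_source hk hE]

end Source

section NonSource

variable {α ε : Type*} [DecidableEq α] [DecidableEq ε] {k d : ℕ} {E : ε → Finset α}

lemma ncard_gadget_reach_le (hk : 2 ≤ k) (hd : ∀ e, (E e).card ≤ d) {x : GV α ε}
    (hx : ∀ e, x ≠ pv e 0) : ((gadget k E).Reach x).ncard ≤ k + d := by
  cases x with
  | pv e i =>
    have hi : i ≠ 0 := fun h => hx e (h ▸ rfl)
    calc ((gadget k E).Reach (pv e i)).ncard ≤ (descendants k E e i).card := by
          simpa using Set.ncard_le_ncard (gadget_reach_pv_subset e i)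
      _ ≤ k + d := by rw [card_descendants]; have := hd e; omega
  | _ =>
    calc ((gadget k E).Reach _).ncard ≤ ({T1, T2} : Set (GV α ε)).ncard :=
          Set.ncard_le_ncard (gadget_reach_subset_terminals (by simp)) (Set.toFinite _)
      _ ≤ k + d := by rw [Set.ncard_pair (by simp)]; omega

lemma gadget_hopdist_le_of_ne_source (hk : 2 ≤ k) {x y : GV α ε} (hx : ∀ e, x ≠ pv e 0)
    (hy : y ∈ (gadget k E).Reach x) : (gadget k E).hopdist x y ≤ k := by
  have hpos : 1 ≤ x.level k := by
    cases x with
    | pv e i => exact Nat.one_le_iff_ne_zero.mpr fun h => hx e (h ▸ rfl)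
    | _ => simp only [level]; omega
  rw [gadget_hopdist hk hy.2, Nat.cast_le]
  have := gadget_level_le_of_mem_reach hy
  omega

lemma hasBall_of_ne_source (hk : 2 ≤ k) (hd : ∀ e, (E e).card ≤ d) {x : GV α ε}
    (hx : ∀ e, x ≠ pv e 0) : (gadget k E).HasBall k (k + d) x :=
  hasBall_of_ncard_reach_le _ (ncard_gadget_reach_le hk hd hx)
    fun _ => gadget_hopdist_le_of_ne_source hk hx

end NonSource

theorem stmt10_general {α ε : Type*} [DecidableEq α] [DecidableEq ε]
    (k ρ d : ℕ) (hk : 2 ≤ k) (hd : 2 ≤ d) (hρ : ρ = k + d)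
    (E : ε → Finset α) (hcard : ∀ e, (E e).card = d) :
    (∀ x : GV α ε, ¬ (gadget k E).HasBall k ρ x ↔ ∃ e : ε, x = GV.pv e 0) ∧
      ∀ e : ε,
        {y : GV α ε | y ≠ GV.pv e 0 ∧
            (gadget k E).hopdist (GV.pv e 0) y ≤ (k : ℕ∞)}.ncard = ρ - 1 ∧
          (gadget k E).hopdist (GV.pv e 0) GV.T2 = ((k + 1 : ℕ) : ℕ∞) := by
  have hE : ∀ e, (E e).Nonempty := fun e => Finset.card_pos.mp (by rw [hcard e]; omega)
  subst hρ
  refine ⟨fun x => ⟨fun hx => ?_, ?_⟩,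
    fun e => ⟨?_, gadget_hopdist_source_T2 hk (hE e)⟩⟩
  · by_contra! hsource
    exact hx (hasBall_of_ne_source hk (fun e => (hcard e).le) hsource)
  · rintro ⟨e, rfl⟩
    simpa [hcard] using not_hasBall_source hk (hE e)
  · simpa [hcard] using ncard_hopdist_le_source hk (hE e)

/-- in the directed hitting-set gadget graph (k ≥ 2, ρ = k + d, all
hyperedges of size exactly d), a vertex fails to have a `(k,ρ)`-ball iff it is
`s_e = pv e 0` for some hyperedge `e`; each `s_e` reaches exactly `ρ - 1` vertices
within `k` hops, and reaches `T2` only in `k+1` hops. -/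
theorem stmt10 {α ε : Type*} [Fintype α] [Fintype ε] [DecidableEq α] [DecidableEq ε]
    (k ρ d : ℕ) (hk : 2 ≤ k) (hd : 2 ≤ d) (hρ : ρ = k + d)
    (E : ε → Finset α) (hcard : ∀ e, (E e).card = d)
    (hV : Nonempty ε → d + 1 ≤ Fintype.card α) :
    (∀ x : GV α ε, ¬ (gadget k E).HasBall k ρ x ↔ ∃ e : ε, x = GV.pv e 0) ∧
      ∀ e : ε,
        {y : GV α ε | y ≠ GV.pv e 0 ∧
            (gadget k E).hopdist (GV.pv e 0) y ≤ (k : ℕ∞)}.ncard = ρ - 1 ∧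
          (gadget k E).hopdist (GV.pv e 0) GV.T2 = ((k + 1 : ℕ) : ℕ∞) :=
  stmt10_general k ρ d hk hd hρ E hcard
end

section
/- If U is a hitting set of the hypergraph H (all hyperedges of size exactly d = ρ − k), then adding the shortcut edges {(v, T_2) : v ∈ U} to the directed gadget graph G(H) turns it into a (k,ρ)-graph. -/
open scoped ENNReal Classical

namespace WGraph

variable {V : Type*} (G : WGraph V)

-- AUX
lemma walkWeight_append (u : V) (p q : List V) :
    G.walkWeight u (p ++ q) = G.walkWeight u p + G.walkWeight (p.getLastD u) q := by
  induction p generalizing u with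
  | nil => simp [walkWeight]
  | cons a p ih =>
    rw [List.cons_append, walkWeight, walkWeight, ih, List.getLastD_cons, add_assoc]

lemma dist_le_walk (u v : V) (p : List V) (h : WalkEnds u p v) :
    G.dist u v ≤ G.walkWeight u p := sInf_le ⟨p, h, rfl⟩

lemma relax_walk (f : V → ℝ≥0∞) (hrel : ∀ a b, f b ≤ f a + G.w a b) :
    ∀ (p : List V) (u : V), f (p.getLastD u) ≤ f u + G.walkWeight u p := by
  intro p
  induction p with
  | nil => intro u; simp [walkWeight]
  | cons a q ih =>
    intro u
    calc f ((a :: q).getLastD u) = f (q.getLastD a) := by rw [List.getLastD_cons]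
    _ ≤ f a + G.walkWeight a q := ih a
    _ ≤ (f u + G.w u a) + G.walkWeight a q := by gcongr; exact hrel u a
    _ = f u + G.walkWeight u (a :: q) := by rw [walkWeight, add_assoc]

lemma le_dist (f : V → ℝ≥0∞) (hrel : ∀ a b, f b ≤ f a + G.w a b)
    (u : V) (h0 : f u = 0) (v : V) : f v ≤ G.dist u v := by
  refine le_sInf ?_
  rintro c ⟨p, hp, rfl⟩
  have := G.relax_walk f hrel p u
  rw [hp, h0, zero_add] at this
  exact this

lemma hopdist_le_of_walk (u v : V) (p : List V) (hp : WalkEnds u p v)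
    (hw : G.walkWeight u p = G.dist u v) (hfin : G.dist u v ≠ ⊤) :
    G.hopdist u v ≤ (p.length : ℕ∞) := by
  rw [hopdist, if_neg hfin]
  exact sInf_le ⟨p, hp, hw, rfl⟩

lemma addD_w_notmem (S : Set (V × V)) (a b : V) (h : (a, b) ∉ S) :
    (G.addD S).w a b = G.w a b := by
  have : {c | (a, b) ∈ S ∧ c = G.dist a b} = ∅ := by ext c; simp [h]
  simp [addD, this]

lemma addD_w_mem (S : Set (V × V)) (a b : V) (h : (a, b) ∈ S) :
    (G.addD S).w a b = G.w a b ⊓ G.dist a b := by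
  have : {c | (a, b) ∈ S ∧ c = G.dist a b} = {G.dist a b} := by ext c; simp [h]
  simp [addD, this]

end WGraph

section Gadget
variable {α ε : Type*} [DecidableEq α] [DecidableEq ε] (K : ℕ) (E : ε → Finset α)

/-- the intended distance function in the shortcut gadget graph -/
noncomputable def gf : GV α ε → GV α ε → ℝ≥0∞
  | .pv e i, .pv e' j => if e = e' ∧ i ≤ j ∧ (j ≤ K ∨ j = i) then ((j - i : ℕ) : ℝ≥0∞) else ⊤
  | .pv e i, .hv v => if i ≤ K ∧ v ∈ E e then ((K - i + 3 : ℕ) : ℝ≥0∞) else ⊤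
  | .pv _ i, .T1 => if i ≤ K then ((K - i + 4 : ℕ) : ℝ≥0∞) else ⊤
  | .pv _ i, .T2 => if i ≤ K then ((K - i + 5 : ℕ) : ℝ≥0∞) else ⊤
  | .hv v, .hv v' => if v = v' then 0 else ⊤
  | .hv _, .T1 => 1
  | .hv _, .T2 => 2
  | .T1, .T1 => 0
  | .T1, .T2 => 1
  | .T2, .T2 => 0
  | _, _ => ⊤

lemma gf_self (u : GV α ε) : gf K E u u = 0 := by
  cases u <;> simp [gf]

lemma relaxG : ∀ u a b : GV α ε, gf K E u b ≤ gf K E u a + gadgetW (K + 2) E a b := by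
  intro u a b
  rcases a with ⟨e, i⟩ | v | _ | _ <;> rcases b with ⟨e', j⟩ | v' | _ | _ <;>
    simp only [gadgetW, Nat.add_sub_cancel, add_top, le_top] <;>
    rcases u with ⟨e₀, i₀⟩ | v₀ | _ | _ <;>
    simp only [gf] <;> (try split_ifs) <;>
    (try first
      | rfl
      | exact le_top
      | exact le_add_right le_rfl
      | simp_all
      | (exact absurd rfl (by assumption)))
  all_goals
    first
      | (norm_num; done)
      | (rename_i h1 h2 h3
         first
           | exact absurd h2.2 (by omega)
           | (obtain ⟨-, hle, -⟩ := h2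
              obtain ⟨-, rfl, hjK⟩ := h3
              first
                | exact absurd hjK (by omega)
                | rw [add_right_comm, tsub_add_cancel_of_le (Nat.cast_le.mpr hle)]))
      | (apply le_of_eq; ring)
lemma gdist_hv_T2 (v : α) : (gadget (K + 2) E).dist (GV.hv v) GV.T2 = 2 := by
  apply le_antisymm
  · have h := (gadget (K + 2) E).dist_le_walk (GV.hv v) GV.T2 [GV.T1, GV.T2] (by rfl)
    simpa [WGraph.walkWeight, gadget, gadgetW, one_add_one_eq_two] using h
  · have := (gadget (K + 2) E).le_dist (gf K E (GV.hv v)) (relaxG K E (GV.hv v))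
      (GV.hv v) (gf_self K E _) GV.T2
    simpa [gf] using this

variable (U : Finset α)

/-- the shortcut set -/
def scs : Set (GV α ε × GV α ε) := {p : GV α ε × GV α ε | ∃ v ∈ U, p = (GV.hv v, GV.T2)}

lemma relax' : ∀ u a b : GV α ε,
    gf K E u b ≤ gf K E u a + ((gadget (K + 2) E).addD (scs U)).w a b := by
  intro u a b
  by_cases h : (a, b) ∈ scs (α := α) (ε := ε) U
  · obtain ⟨v, hvU, heq⟩ := h
    obtain ⟨rfl, rfl⟩ := Prod.mk.injEq .. ▸ heq
    rw [(gadget (K + 2) E).addD_w_mem _ _ _ (⟨v, hvU, rfl⟩ : _ ∈ scs U), gdist_hv_T2]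
    have hw : gadgetW (K + 2) E (GV.hv v) GV.T2 = ⊤ := rfl
    show gf K E u GV.T2 ≤ gf K E u (GV.hv v) + gadgetW (K + 2) E (GV.hv v) GV.T2 ⊓ 2
    rw [hw, top_inf_eq]
    rcases u with ⟨e₀, i₀⟩ | v₀ | _ | _ <;> simp only [gf] <;> (try split_ifs) <;>
      first
        | (simp_all; done)
        | exact le_top
        | (rename_i h1 h2; exact absurd h1.1 (by omega))
        | exact_mod_cast Nat.le_refl _
        | (apply le_of_eq
           push_cast
           ring)
  · rw [(gadget (K + 2) E).addD_w_notmem _ _ _ h]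
    exact relaxG K E u a b
/-- chain of path vertices `pv e (i+1), …, pv e (i+n)` -/
def chainL (e : ε) : ℕ → ℕ → List (GV α ε)
  | _, 0 => []
  | i, n + 1 => GV.pv e (i + 1) :: chainL e (i + 1) n

@[simp] lemma chainL_length (e : ε) (i n : ℕ) : (chainL (α := α) e i n).length = n := by
  induction n generalizing i with
  | zero => rfl
  | succ n ih => simp [chainL, ih]

lemma chainL_last (e : ε) (i n : ℕ) :
    (chainL (α := α) e i n).getLastD (GV.pv e i) = GV.pv e (i + n) := by
  induction n generalizing i with
  | zero => rfl
  | succ n ih => rw [chainL, List.getLastD_cons, ih]; ring_nf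

lemma notmem_scs_of_ne_hv (a b : GV α ε) (h : ∀ v : α, a ≠ GV.hv v) :
    (a, b) ∉ scs (α := α) (ε := ε) U := by
  rintro ⟨v', -, hp⟩
  injection hp with h1 h2
  exact h v' h1

lemma w'_pv (e : ε) (i : ℕ) (b : GV α ε) :
    ((gadget (K + 2) E).addD (scs U)).w (GV.pv e i) b = gadgetW (K + 2) E (GV.pv e i) b :=
  WGraph.addD_w_notmem _ _ _ _ (notmem_scs_of_ne_hv U _ _ (fun v h => nomatch h))

lemma w'_T1T2 : ((gadget (K + 2) E).addD (scs U)).w GV.T1 GV.T2 = 1 :=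
  (WGraph.addD_w_notmem _ _ _ _ (notmem_scs_of_ne_hv U _ _ (fun v h => nomatch h)))

lemma w'_hvT1 (v : α) : ((gadget (K + 2) E).addD (scs U)).w (GV.hv v) GV.T1 = 1 := by
  rw [WGraph.addD_w_notmem]
  · rfl
  · rintro ⟨v', -, hp⟩
    simp [Prod.ext_iff] at hp
lemma w'_hvT2 (v : α) (hv : v ∈ U) : ((gadget (K + 2) E).addD (scs U)).w (GV.hv v) GV.T2 = 2 := by
  rw [WGraph.addD_w_mem _ _ _ _ (⟨v, hv, rfl⟩ : _ ∈ scs U), gdist_hv_T2]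
  show gadgetW (K + 2) E (GV.hv v) GV.T2 ⊓ 2 = 2
  rw [show gadgetW (K + 2) E (GV.hv v) GV.T2 = ⊤ from rfl, top_inf_eq]

lemma chainL_weight (e : ε) (i n : ℕ) (h : i + n ≤ K) :
    ((gadget (K + 2) E).addD (scs U)).walkWeight (GV.pv e i) (chainL e i n) = (n : ℝ≥0∞) := by
  induction n generalizing i with
  | zero => simp [chainL, WGraph.walkWeight]
  | succ n ih =>
    rw [chainL, WGraph.walkWeight, ih (i + 1) (by omega), w'_pv]
    have : gadgetW (K + 2) E (GV.pv e i) (GV.pv e (i + 1)) = 1 := by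
      rw [show gadgetW (K + 2) E (GV.pv e i) (GV.pv e (i + 1)) =
        if e = e ∧ i + 1 = i + 1 ∧ i + 1 ≤ K + 2 - 2 then 1 else ⊤ from rfl,
        if_pos ⟨rfl, rfl, by omega⟩]
    rw [this]
    push_cast
    ring
lemma getLastD_append' (u : GV α ε) (p q : List (GV α ε)) :
    (p ++ q).getLastD u = q.getLastD (p.getLastD u) := by
  induction p generalizing u with
  | nil => rfl
  | cons a p ih => rw [List.cons_append, List.getLastD_cons, List.getLastD_cons, ih]

lemma w'_pvK_hv (e : ε) (v : α) (hv : v ∈ E e) :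
    ((gadget (K + 2) E).addD (scs U)).w (GV.pv e K) (GV.hv v) = 3 := by
  rw [w'_pv, show gadgetW (K + 2) E (GV.pv e K) (GV.hv v) =
    if K = K + 2 - 2 ∧ v ∈ E e then 3 else ⊤ from rfl, if_pos ⟨rfl, hv⟩]

lemma witness (hE : ∀ e, (E e).Nonempty) (hU : ∀ e, ∃ v ∈ U, v ∈ E e) :
    ∀ u v : GV α ε, gf K E u v ≠ ⊤ →
    ∃ p : List (GV α ε), WalkEnds u p v ∧
      ((gadget (K + 2) E).addD (scs U)).walkWeight u p = gf K E u v ∧ p.length ≤ K + 2 := by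
  intro u v hf
  rcases u with ⟨e, i⟩ | v₀ | _ | _ <;> rcases v with ⟨e', j⟩ | v₁ | _ | _ <;>
    simp only [gf] at hf ⊢ <;> try (exact absurd rfl hf)
  · -- pv → pv
    split_ifs at hf ⊢ with hc
    · obtain ⟨rfl, hij, hjk⟩ := hc
      rcases eq_or_ne j i with rfl | hne
      · exact ⟨[], rfl, by simp [WGraph.walkWeight], by simp⟩
      · have hjK : j ≤ K := by rcases hjk with h | h; exact h; omega
        refine ⟨chainL e i (j - i), ?_, ?_, by simp only [List.length_append, chainL_length, List.length_cons, List.length_nil]; omega⟩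
        · show _ = _
          rw [chainL_last, show i + (j - i) = j from by omega]
        · rw [chainL_weight K E U e i (j - i) (by omega)]
    · exact absurd rfl hf
  · -- pv → hv
    split_ifs at hf ⊢ with hc
    · obtain ⟨hiK, hv₁⟩ := hc
      refine ⟨chainL e i (K - i) ++ [GV.hv v₁], ?_, ?_, by simp only [List.length_append, chainL_length, List.length_cons, List.length_nil]; omega⟩
      · show _ = _
        rw [getLastD_append']
        rfl
      · rw [WGraph.walkWeight_append, chainL_weight K E U e i (K - i) (by omega),
          chainL_last, show i + (K - i) = K from by omega]
        show _ + (_ + (0:ℝ≥0∞)) = _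
        rw [w'_pvK_hv K E U e v₁ hv₁]
        push_cast
        ring
    · exact absurd rfl hf
  · -- pv → T1
    split_ifs at hf ⊢ with hc
    · obtain ⟨v₁, hv₁⟩ := hE e
      refine ⟨chainL e i (K - i) ++ [GV.hv v₁, GV.T1], ?_, ?_, by simp only [List.length_append, chainL_length, List.length_cons, List.length_nil]; omega⟩
      · show _ = _
        rw [getLastD_append']
        rfl
      · rw [WGraph.walkWeight_append, chainL_weight K E U e i (K - i) (by omega),
          chainL_last, show i + (K - i) = K from by omega]
        show _ + (_ + (_ + (0:ℝ≥0∞))) = _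
        rw [w'_pvK_hv K E U e v₁ hv₁, w'_hvT1]
        push_cast
        ring
    · exact absurd rfl hf
  · -- pv → T2
    split_ifs at hf ⊢ with hc
    · obtain ⟨v₁, hv₁U, hv₁E⟩ := hU e
      refine ⟨chainL e i (K - i) ++ [GV.hv v₁, GV.T2], ?_, ?_, by simp only [List.length_append, chainL_length, List.length_cons, List.length_nil]; omega⟩
      · show _ = _
        rw [getLastD_append']
        rfl
      · rw [WGraph.walkWeight_append, chainL_weight K E U e i (K - i) (by omega),
          chainL_last, show i + (K - i) = K from by omega]
        show _ + (_ + (_ + (0:ℝ≥0∞))) = _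
        rw [w'_pvK_hv K E U e v₁ hv₁E, w'_hvT2 K E U v₁ hv₁U]
        push_cast
        ring
    · exact absurd rfl hf
  · -- hv → hv
    split_ifs at hf ⊢ with hc
    · subst hc
      exact ⟨[], rfl, by simp [WGraph.walkWeight], by simp⟩
    · exact absurd rfl hf
  · -- hv → T1
    refine ⟨[GV.T1], rfl, ?_, by simp⟩
    show _ + (0:ℝ≥0∞) = _
    rw [w'_hvT1, add_zero]
  · -- hv → T2
    refine ⟨[GV.T1, GV.T2], rfl, ?_, by simp⟩
    show _ + (_ + (0:ℝ≥0∞)) = _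
    rw [w'_hvT1, w'_T1T2]
    norm_num
  · -- T1 → T1
    exact ⟨[], rfl, by simp [WGraph.walkWeight], by simp⟩
  · -- T1 → T2
    refine ⟨[GV.T2], rfl, ?_, by simp⟩
    show _ + (0:ℝ≥0∞) = _
    rw [w'_T1T2, add_zero]
  · -- T2 → T2
    exact ⟨[], rfl, by simp [WGraph.walkWeight], by simp⟩
lemma gf_finset (d : ℕ) (hd : ∀ e, (E e).card = d) (u : GV α ε) :
    ∃ F : Finset (GV α ε), {v | v ≠ u ∧ gf K E u v ≠ ⊤} ⊆ ↑F ∧ F.card ≤ K + 2 + d := by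
  rcases u with ⟨e, i⟩ | v₀ | _ | _
  · refine ⟨((Finset.Icc (i + 1) K).image (GV.pv e)) ∪ ((E e).image GV.hv) ∪ {GV.T1, GV.T2},
      ?_, ?_⟩
    · rintro v ⟨hne, hf⟩
      simp only [Finset.coe_union, Set.mem_union, Finset.mem_coe, Finset.mem_image,
        Finset.coe_insert, Set.mem_insert_iff, Finset.coe_singleton, Set.mem_singleton_iff]
      rcases v with ⟨e', j⟩ | v₁ | _ | _ <;> simp only [gf] at hf <;> try (exact absurd rfl hf)
      · split_ifs at hf with hc
        · obtain ⟨rfl, hij, hjk⟩ := hc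
          have hji : j ≠ i := fun h => hne (by rw [h])
          exact Or.inl (Or.inl ⟨j, Finset.mem_Icc.mpr ⟨by omega, by
            rcases hjk with h | h; exact h; omega⟩, rfl⟩)
        · exact absurd rfl hf
      · split_ifs at hf with hc
        · exact Or.inl (Or.inr ⟨v₁, hc.2, rfl⟩)
        · exact absurd rfl hf
      · exact Or.inr (Or.inl rfl)
      · exact Or.inr (Or.inr rfl)
    · calc _ ≤ ((Finset.Icc (i + 1) K).image (GV.pv e) ∪ (E e).image GV.hv).card
              + ({GV.T1, GV.T2} : Finset (GV α ε)).card := Finset.card_union_le _ _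
        _ ≤ ((Finset.Icc (i + 1) K).image (GV.pv e)).card + ((E e).image GV.hv).card
              + ({GV.T1, GV.T2} : Finset (GV α ε)).card := by
            gcongr
            exact Finset.card_union_le _ _
        _ ≤ (Finset.Icc (i + 1) K).card + (E e).card + 2 := by
            gcongr <;> first | exact Finset.card_image_le | simp
        _ ≤ K + 2 + d := by rw [Nat.card_Icc, hd e]; omega
  · refine ⟨{GV.T1, GV.T2}, ?_, le_trans (by simp) (by omega : 2 ≤ K + 2 + d)⟩
    rintro v ⟨hne, hf⟩
    rcases v with ⟨e', j⟩ | v₁ | _ | _ <;> simp only [gf] at hf <;> try (exact absurd rfl hf)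
    · split_ifs at hf with hc
      · exact absurd (by rw [hc]) hne
      · exact absurd rfl hf
    · simp
    · simp
  · refine ⟨{GV.T2}, ?_, le_trans (by simp) (by omega : 1 ≤ K + 2 + d)⟩
    rintro v ⟨hne, hf⟩
    rcases v with ⟨e', j⟩ | v₁ | _ | _ <;> simp only [gf] at hf <;> try (exact absurd rfl hf)
    · exact absurd rfl hne
    · simp
  · refine ⟨∅, ?_, by simp⟩
    rintro v ⟨hne, hf⟩
    rcases v with ⟨e', j⟩ | v₁ | _ | _ <;> simp only [gf] at hf <;> try (exact absurd rfl hf)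
    exact absurd rfl hne

end Gadget

theorem stmt11_aux {α ε : Type*} [Fintype α] [Fintype ε] [DecidableEq α] [DecidableEq ε]
    (K d : ℕ) (hd : 2 ≤ d)
    (E : ε → Finset α) (hcard : ∀ e, (E e).card = d)
    (U : Finset α) (hU : IsHittingSet E U) :
    ((gadget (K + 2) E).addD (scs U)).IsKRhoGraph (K + 2) (K + 2 + d) := by
  have hE : ∀ e, (E e).Nonempty := fun e => Finset.card_pos.mp (by rw [hcard e]; omega)
  intro u
  have hlb : ∀ v, gf K E u v ≤ ((gadget (K + 2) E).addD (scs U)).dist u v :=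
    fun v => WGraph.le_dist _ _ (relax' K E U u) u (gf_self K E u) v
  obtain ⟨F, hFsub, hFcard⟩ := gf_finset K E d hcard u
  have hRsub : ((gadget (K + 2) E).addD (scs U)).Reach u ⊆ ↑F :=
    fun v hv => hFsub ⟨hv.1, fun h => hv.2 (top_le_iff.mp (h ▸ hlb v))⟩
  have hnc : (((gadget (K + 2) E).addD (scs U)).Reach u).ncard ≤ K + 2 + d := by
    have := Set.ncard_le_ncard hRsub F.finite_toSet
    rw [Set.ncard_coe_finset] at this
    exact this.trans hFcard
  refine ⟨((gadget (K + 2) E).addD (scs U)).Reach u,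
    ⟨subset_rfl, (min_eq_left hnc).symm, fun v _ x hx => (hx.2 hx.1).elim⟩, ?_⟩
  rintro v hv
  have hfv : gf K E u v ≠ ⊤ := fun h => hv.2 (top_le_iff.mp (h ▸ hlb v))
  obtain ⟨p, hp, hw, hlen⟩ := witness K E U hE hU u v hfv
  have hdist : ((gadget (K + 2) E).addD (scs U)).dist u v = gf K E u v :=
    le_antisymm (hw ▸ ((gadget (K + 2) E).addD (scs U)).dist_le_walk u v p hp) (hlb v)
  refine le_trans (((gadget (K + 2) E).addD (scs U)).hopdist_le_of_walk u v p hp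
    (by rw [hdist, hw]) hv.2) ?_
  exact_mod_cast hlen

/-- if `U` is a hitting set of the (uniform, size-`d`) hypergraph, then
adding the shortcuts `(hv v, T2)` for `v ∈ U` turns the directed gadget graph into a
`(k,ρ)`-graph, where `ρ = k + d`. -/
theorem stmt11 {α ε : Type*} [Fintype α] [Fintype ε] [DecidableEq α] [DecidableEq ε]
    (k ρ d : ℕ) (hk : 2 ≤ k) (hd : 2 ≤ d) (hρ : ρ = k + d)
    (E : ε → Finset α) (hcard : ∀ e, (E e).card = d)
    (hV : Nonempty ε → d + 1 ≤ Fintype.card α)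
    (U : Finset α) (hU : IsHittingSet E U) :
    ((gadget k E).addD
        {p : GV α ε × GV α ε | ∃ v ∈ U, p = (GV.hv v, GV.T2)}).IsKRhoGraph k ρ := by
  obtain ⟨K, rfl⟩ : ∃ K, k = K + 2 := ⟨k - 2, by omega⟩
  subst hρ
  exact stmt11_aux K d hd E hcard U hU
end
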